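/- Diagonal configurations are stable under the zero-temperature dynamics and move in the NE direction: for every L ≥ 2 and all parameters J, q with 0 < q < 2J, if the initial configuration σ is diagonal (constant on each diagonal D_m) and u : Λ × {1,...,N} → (0,1) satisfies u_x(m) ∈ (ε_L, 1 − ε_L) for all x ∈ Λ and 1 ≤ m ≤ N, where ε_L = e^{−2J+q}/(2 cosh(2J−q)), then for every n ≤ N the trajectory configuration σ(n) is diagonal, and its constant value on the diagonal D_m equals the value of σ on the diagonal D_{m−n} (indices mod L). -/

import Mathlib

open Real Filter MeasureTheory

noncomputable section

/-- A site of the 2d discrete torus `(ℤ/Lℤ)²`. -/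
abbrev Site (L : ℕ) := ZMod L × ZMod L

/-- A spin configuration on the torus, `true = +1`, `false = -1`. -/
abbrev Cfg (L : ℕ) := Site L → Bool

/-- The real spin value of a Boolean spin. -/
def spin (b : Bool) : ℝ := if b then 1 else -1

/-- The up neighbor. -/
def upN {L : ℕ} (x : Site L) : Site L := (x.1, x.2 + 1)
/-- The right neighbor. -/
def rtN {L : ℕ} (x : Site L) : Site L := (x.1 + 1, x.2)
/-- The down neighbor. -/
def dnN {L : ℕ} (x : Site L) : Site L := (x.1, x.2 - 1)
/-- The left neighbor. -/
def lfN {L : ℕ} (x : Site L) : Site L := (x.1 - 1, x.2)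

/-- The pair Hamiltonian `H(σ,τ) = −∑_x [J σ_x (τ_{x^u} + τ_{x^r}) + q σ_x τ_x]`. -/
def pairH (L : ℕ) [NeZero L] (J q : ℝ) (σ τ : Cfg L) : ℝ :=
  - ∑ x : Site L, (J * spin (σ x) * (spin (τ (upN x)) + spin (τ (rtN x)))
      + q * spin (σ x) * spin (τ x))

/-- The normalization `Z_σ = ∑_τ e^{−H(σ,τ)}`. -/
def Zconf (L : ℕ) [NeZero L] (J q : ℝ) (σ : Cfg L) : ℝ :=
  ∑ τ : Cfg L, Real.exp (-(pairH L J q σ τ))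

/-- The PCA transition probabilities `P(σ,τ) = e^{−H(σ,τ)}/Z_σ`. -/
def Ptrans (L : ℕ) [NeZero L] (J q : ℝ) (σ τ : Cfg L) : ℝ :=
  Real.exp (-(pairH L J q σ τ)) / Zconf L J q σ

/-- `Z_PCA = ∑_σ Z_σ`. -/
def Zpca (L : ℕ) [NeZero L] (J q : ℝ) : ℝ := ∑ σ : Cfg L, Zconf L J q σ

/-- The PCA stationary measure `π_PCA(σ) = Z_σ / Z_PCA`. -/
def piPCA (L : ℕ) [NeZero L] (J q : ℝ) (σ : Cfg L) : ℝ := Zconf L J q σ / Zpca L J q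

/-- The Ising Hamiltonian `H_G(σ) = −J ∑_{(x,y)} σ_x σ_y`, the sum over (unordered)
nearest-neighbor pairs of the torus, each pair being counted once via its up/right bond. -/
def isingH (L : ℕ) [NeZero L] (J : ℝ) (σ : Cfg L) : ℝ :=
  - J * ∑ x : Site L, spin (σ x) * (spin (σ (upN x)) + spin (σ (rtN x)))

/-- The Ising partition function. -/
def Zg (L : ℕ) [NeZero L] (J : ℝ) : ℝ := ∑ σ : Cfg L, Real.exp (-(isingH L J σ))

/-- The Ising Gibbs measure `π_G(σ) = e^{−H_G(σ)}/Z_G`. -/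
def piG (L : ℕ) [NeZero L] (J : ℝ) (σ : Cfg L) : ℝ := Real.exp (-(isingH L J σ)) / Zg L J

/-- Total variation distance between two measures on configuration space. -/
def tv (L : ℕ) [NeZero L] (μ ν : Cfg L → ℝ) : ℝ := (1/2) * ∑ σ : Cfg L, |μ σ - ν σ|

/-- The all-plus configuration. -/
def plusCfg (L : ℕ) : Cfg L := fun _ => true
/-- The all-minus configuration. -/
def minusCfg (L : ℕ) : Cfg L := fun _ => false

/-- The local field `a_x = J(σ_{x^d} + σ_{x^l}) + q σ_x` at site `x`. -/
def localField (L : ℕ) [NeZero L] (J q : ℝ) (σ : Cfg L) (x : Site L) : ℝ :=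
  J * (spin (σ (dnN x)) + spin (σ (lfN x))) + q * spin (σ x)

/-- One step of the deterministic update rule driven by the numbers `u : Λ → (0,1)`:
`σ_x` becomes `+1` iff `u_x ≤ e^{a_x}/(2 cosh a_x)`. -/
def stepCfg (L : ℕ) [NeZero L] (J q : ℝ) (u : Site L → ℝ) (σ : Cfg L) : Cfg L :=
  fun x =>
    if u x ≤ Real.exp (localField L J q σ x) / (2 * Real.cosh (localField L J q σ x))
      then true else false

/-- The trajectory of the PCA built from the numbers `u : Λ × {1,2,...} → (0,1)` and the
initial configuration `σ(0) = σ`; the update from time `n` to `n+1` uses `u · (n+1)`. -/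
def traj (L : ℕ) [NeZero L] (J q : ℝ) (u : Site L → ℕ → ℝ) (σ : Cfg L) : ℕ → Cfg L
  | 0 => σ
  | n + 1 => stepCfg L J q (fun x => u x (n + 1)) (traj L J q u σ n)

/-- `ε = e^{−2J+q}/(2 cosh(2J−q))`: uniform numbers in `(ε, 1−ε)` produce no atypical
updating. -/
def epsJq (J q : ℝ) : ℝ :=
  Real.exp (-(2 * J) + q) / (2 * Real.cosh (2 * J - q))

/-!
At zero temperature the update at `x` follows the common value of the down and left neighbours
whenever they agree: the field is then `±2J + qσ_x`, at least `2J - q` in absolute value, and the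
uniform numbers avoid the `ε`-tails where such a field could be overruled. On a diagonal
configuration the down and left neighbours of every site lie on the same diagonal, the preceding
one, so each step shifts the configuration by one diagonal.
-/

lemma exp_div_two_cosh_monotone : Monotone fun a : ℝ => exp a / (2 * cosh a) := by
  intro a b hab
  have ha : (0 : ℝ) < 2 * cosh a := by positivity
  have hb : (0 : ℝ) < 2 * cosh b := by positivity
  dsimp only
  rw [div_le_div_iff₀ ha hb, cosh_eq, cosh_eq]
  have h : exp a * exp (-b) ≤ exp b * exp (-a) := by
    rw [← exp_add, ← exp_add]
    exact exp_le_exp.2 (by linarith)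
  nlinarith [exp_pos a, exp_pos b]

lemma one_sub_exp_div_two_cosh (a : ℝ) :
    1 - exp a / (2 * cosh a) = exp (-a) / (2 * cosh (-a)) := by
  have hc : (0 : ℝ) < 2 * cosh a := by positivity
  rw [cosh_neg, eq_div_iff hc.ne', sub_mul, div_mul_cancel₀ _ hc.ne', cosh_eq]
  ring

lemma epsJq_eq (J q : ℝ) : epsJq J q = exp (-(2 * J - q)) / (2 * cosh (-(2 * J - q))) := by
  rw [epsJq, cosh_neg]
  ring_nf

lemma one_sub_epsJq (J q : ℝ) : 1 - epsJq J q = exp (2 * J - q) / (2 * cosh (2 * J - q)) := by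
  rw [epsJq_eq, ← one_sub_exp_div_two_cosh, sub_sub_cancel]

lemma stepCfg_apply_of_dnN_eq_lfN {L : ℕ} [NeZero L] {J q : ℝ} (hq : 0 ≤ q)
    {u : Site L → ℝ} {σ : Cfg L} {x : Site L} {b : Bool}
    (hd : σ (dnN x) = b) (hl : σ (lfN x) = b)
    (hu : u x ∈ Set.Ioo (epsJq J q) (1 - epsJq J q)) :
    stepCfg L J q u σ x = b := by
  have hfield : localField L J q σ x = 2 * J * spin b + q * spin (σ x) := by
    rw [localField, hd, hl]
    ring
  simp only [stepCfg]
  cases b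
  · have hneg : localField L J q σ x ≤ -(2 * J - q) := by
      rw [hfield]
      cases σ x <;> norm_num [spin]; linarith
    have hsmall :
        exp (localField L J q σ x) / (2 * cosh (localField L J q σ x)) ≤ epsJq J q := by
      rw [epsJq_eq]
      exact exp_div_two_cosh_monotone hneg
    rw [if_neg (by linarith [hu.1])]
  · have hpos : 2 * J - q ≤ localField L J q σ x := by
      rw [hfield]
      cases σ x <;> norm_num [spin]; linarith
    have hlarge :
        1 - epsJq J q ≤ exp (localField L J q σ x) / (2 * cosh (localField L J q σ x)) := by
      rw [one_sub_epsJq]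
      exact exp_div_two_cosh_monotone hpos
    rw [if_pos (by linarith [hu.2])]

theorem stmt18_general (L : ℕ) [NeZero L] (J q : ℝ) (hq : 0 < q)
    (σ : Cfg L) (hdiag : ∀ x y : Site L, x.1 + x.2 = y.1 + y.2 → σ x = σ y)
    (N : ℕ) (u : Site L → ℕ → ℝ)
    (hu : ∀ x : Site L, ∀ m : ℕ, 1 ≤ m → m ≤ N →
      u x m ∈ Set.Ioo (epsJq J q) (1 - epsJq J q)) :
    ∀ n : ℕ, n ≤ N → ∀ x : Site L,
      traj L J q u σ n x = σ (x.1 - (n : ZMod L), x.2) := by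
  intro n
  induction n with
  | zero => intro _ x; simp [traj]
  | succ n ih =>
    intro hn x
    have hσn := ih (by omega)
    refine stepCfg_apply_of_dnN_eq_lfN hq.le ?_ ?_ (hu x (n + 1) (by omega) hn)
    · rw [hσn]
      exact hdiag _ _ (by simp only [dnN]; push_cast; ring)
    · rw [hσn]
      exact hdiag _ _ (by simp only [lfN]; push_cast; ring)

/-- Diagonal configurations are stable under the zero-temperature
dynamics and move in the NE direction: for `L ≥ 2`, `0 < q < 2J`, if `σ` is constant on
each NW–SE diagonal and all numbers `u_x(m)`, `1 ≤ m ≤ N`, lie in `(ε_L, 1 − ε_L)`, then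
for every `n ≤ N` the configuration `σ(n)` is diagonal, its value at a site `x` of the
diagonal `D_m` being the value of `σ` on the diagonal `D_{m−n}` (e.g. at the site
`(x₁ − n, x₂) ∈ D_{m−n}`). -/
theorem stmt18 (L : ℕ) [NeZero L] (hL : 2 ≤ L) (J q : ℝ) (hq : 0 < q) (hqJ : q < 2 * J)
    (σ : Cfg L) (hdiag : ∀ x y : Site L, x.1 + x.2 = y.1 + y.2 → σ x = σ y)
    (N : ℕ) (u : Site L → ℕ → ℝ)
    (hu : ∀ x : Site L, ∀ m : ℕ, 1 ≤ m → m ≤ N →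
      u x m ∈ Set.Ioo (epsJq J q) (1 - epsJq J q)) :
    ∀ n : ℕ, n ≤ N → ∀ x : Site L,
      traj L J q u σ n x = σ (x.1 - (n : ZMod L), x.2) :=
  stmt18_general L J q hq σ hdiag N u hu
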